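/- arXiv:1701.08883 — 4 statements merged into one kernel-verified Lean document; each statement's English description precedes it below -/
import Mathlib

section
/- The maximum over p in [0,1] of h(p)/(1+p), where h is the binary entropy function, is attained at p* = (3 - sqrt(5))/2. -/
noncomputable def binEnt (p : ℝ) : ℝ := -p * Real.logb 2 p - (1 - p) * Real.logb 2 (1 - p)

lemma key_ineq (p : ℝ) (hp : 0 < p) (hp1 : p < 1) :
    -p * Real.log p - (1 - p) * Real.log (1 - p)
      ≤ (1 + p) * Real.log ((1 + Real.sqrt 5) / 2) := by
  set φ := (1 + Real.sqrt 5) / 2 with hφdef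
  have hs : Real.sqrt 5 ^ 2 = 5 := Real.sq_sqrt (by norm_num)
  have hs1 : 1 < Real.sqrt 5 := by nlinarith [Real.sqrt_nonneg 5]
  have hφ1 : 1 < φ := by rw [hφdef]; linarith
  have hφ0 : 0 < φ := by linarith
  have hφ2 : φ ^ 2 = φ + 1 := by rw [hφdef]; field_simp; nlinarith
  have h1p : 0 < 1 - p := by linarith
  have h1 : Real.log (1 / (p * φ ^ 2)) ≤ 1 / (p * φ ^ 2) - 1 :=
    Real.log_le_sub_one_of_pos (by positivity)
  have h2 : Real.log (1 / ((1 - p) * φ)) ≤ 1 / ((1 - p) * φ) - 1 :=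
    Real.log_le_sub_one_of_pos (by positivity)
  have e1 : Real.log (1 / (p * φ ^ 2)) = -(Real.log p + 2 * Real.log φ) := by
    rw [one_div, Real.log_inv, Real.log_mul (ne_of_gt hp) (by positivity), Real.log_pow]
    push_cast; ring
  have e2 : Real.log (1 / ((1 - p) * φ)) = -(Real.log (1 - p) + Real.log φ) := by
    rw [one_div, Real.log_inv, Real.log_mul (ne_of_gt h1p) (ne_of_gt hφ0)]
  rw [e1] at h1
  rw [e2] at h2
  have H1 := mul_le_mul_of_nonneg_left h1 hp.le
  have H2 := mul_le_mul_of_nonneg_left h2 h1p.le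
  have hA : p * (1 / (p * φ ^ 2)) = 1 / φ ^ 2 := by
    field_simp
  have hB : (1 - p) * (1 / ((1 - p) * φ)) = 1 / φ := by
    field_simp
  have hsum : 1 / φ ^ 2 + 1 / φ = 1 := by
    field_simp
    nlinarith
  nlinarith [H1, H2, hA, hB, hsum]

lemma binEnt_le (p : ℝ) (h0 : 0 ≤ p) (h1 : p ≤ 1) :
    binEnt p ≤ (1 + p) * Real.logb 2 ((1 + Real.sqrt 5) / 2) := by
  have hs : Real.sqrt 5 ^ 2 = 5 := Real.sq_sqrt (by norm_num)
  have hs1 : 1 < Real.sqrt 5 := by nlinarith [Real.sqrt_nonneg 5]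
  have hc : 0 ≤ Real.logb 2 ((1 + Real.sqrt 5) / 2) :=
    Real.logb_nonneg (by norm_num) (by linarith)
  rcases eq_or_lt_of_le h0 with rfl | h0'
  · simp [binEnt]; exact hc
  rcases eq_or_lt_of_le h1 with rfl | h1'
  · simp [binEnt]; linarith
  have key := key_ineq p h0' h1'
  have hlog2 : (0 : ℝ) < Real.log 2 := Real.log_pos one_lt_two
  unfold binEnt Real.logb
  have eL : -p * (Real.log p / Real.log 2) - (1 - p) * (Real.log (1 - p) / Real.log 2)
      = (-p * Real.log p - (1 - p) * Real.log (1 - p)) / Real.log 2 := by ring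
  have eR : (1 + p) * (Real.log ((1 + Real.sqrt 5) / 2) / Real.log 2)
      = ((1 + p) * Real.log ((1 + Real.sqrt 5) / 2)) / Real.log 2 := by ring
  rw [eL, eR]
  gcongr

lemma binEnt_eq : binEnt ((3 - Real.sqrt 5) / 2)
    = (1 + (3 - Real.sqrt 5) / 2) * Real.logb 2 ((1 + Real.sqrt 5) / 2) := by
  set φ := (1 + Real.sqrt 5) / 2 with hφdef
  set q := (3 - Real.sqrt 5) / 2 with hqdef
  have hs : Real.sqrt 5 ^ 2 = 5 := Real.sq_sqrt (by norm_num)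
  have hs1 : 1 < Real.sqrt 5 := by nlinarith [Real.sqrt_nonneg 5]
  have hs3 : Real.sqrt 5 < 3 := by nlinarith [Real.sqrt_nonneg 5]
  have hq0 : 0 < q := by rw [hqdef]; linarith
  have hq1 : 0 < 1 - q := by rw [hqdef]; linarith
  have hφ0 : 0 < φ := by rw [hφdef]; linarith
  have eq1 : q * φ ^ 2 = 1 := by rw [hqdef, hφdef]; field_simp; nlinarith
  have eq2 : (1 - q) * φ = 1 := by rw [hqdef, hφdef]; field_simp; nlinarith
  have l1 : Real.log q = -(2 * Real.log φ) := by
    have : Real.log (q * φ ^ 2) = 0 := by rw [eq1, Real.log_one]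
    rw [Real.log_mul (ne_of_gt hq0) (by positivity), Real.log_pow] at this
    push_cast at this; linarith
  have l2 : Real.log (1 - q) = -Real.log φ := by
    have : Real.log ((1 - q) * φ) = 0 := by rw [eq2, Real.log_one]
    rw [Real.log_mul (ne_of_gt hq1) (ne_of_gt hφ0)] at this
    linarith
  unfold binEnt Real.logb
  rw [l1, l2]
  ring

/-- The maximum over `p ∈ [0,1]` of `h(p)/(1+p)` is attained at `p* = (3 - √5)/2`. -/
theorem stmt_0 :
    IsMaxOn (fun p : ℝ => binEnt p / (1 + p)) (Set.Icc 0 1) ((3 - Real.sqrt 5) / 2) := by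
  intro p hp
  obtain ⟨h0, h1⟩ := hp
  have hs1 : 1 < Real.sqrt 5 := by
    nlinarith [Real.sqrt_nonneg 5, Real.sq_sqrt (show (0:ℝ) ≤ 5 by norm_num)]
  have hs3 : Real.sqrt 5 < 3 := by
    nlinarith [Real.sqrt_nonneg 5, Real.sq_sqrt (show (0:ℝ) ≤ 5 by norm_num)]
  have hq : (0 : ℝ) < 1 + (3 - Real.sqrt 5) / 2 := by linarith
  have hval : binEnt ((3 - Real.sqrt 5) / 2) / (1 + (3 - Real.sqrt 5) / 2)
      = Real.logb 2 ((1 + Real.sqrt 5) / 2) := by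
    rw [binEnt_eq, mul_comm, mul_div_assoc, div_self (ne_of_gt hq), mul_one]
  simp only [Set.mem_setOf_eq]
  rw [hval]
  have hp1 : (0 : ℝ) < 1 + p := by linarith
  rw [div_le_iff₀ hp1]
  have := binEnt_le p h0 h1
  linarith
end

section
/- For all delta in [0,1], the noisy capacity C(delta) = max_{0<=p<=1} [h((1-delta)p) - p*h(delta)]/[(1-p)+delta*p+2*(1-delta)*p] is at most the noiseless capacity C(0) = max_{0<=p<=1} h(p)/(1+p). -/
noncomputable def Cnoisy (δ : ℝ) : ℝ :=
  sSup ((fun p : ℝ =>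
    (binEnt ((1 - δ) * p) - p * binEnt δ) / ((1 - p) + δ * p + 2 * (1 - δ) * p)) ''
      Set.Icc 0 1)

lemma binEnt_continuous : Continuous binEnt := by
  have h : binEnt = fun p => (Real.negMulLog p + Real.negMulLog (1 - p)) / Real.log 2 := by
    funext p
    simp [binEnt, Real.negMulLog, Real.logb]
    ring
  rw [h]
  exact ((Real.continuous_negMulLog.add
    (Real.continuous_negMulLog.comp (continuous_const.sub continuous_id))).div_const _)

lemma binEnt_nonneg {x : ℝ} (h0 : 0 ≤ x) (h1 : x ≤ 1) : 0 ≤ binEnt x := by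
  unfold binEnt
  have l1 : Real.logb 2 x ≤ 0 := Real.logb_nonpos (by norm_num) h0 h1
  have l2 : Real.logb 2 (1 - x) ≤ 0 := Real.logb_nonpos (by norm_num) (by linarith) (by linarith)
  nlinarith

lemma noiseless_eq :
    Cnoisy 0 = sSup ((fun p : ℝ => binEnt p / (1 + p)) '' Set.Icc 0 1) := by
  unfold Cnoisy
  have h0 : binEnt 0 = 0 := by simp [binEnt]
  have hfun : (fun p : ℝ => (binEnt ((1 - (0:ℝ)) * p) - p * binEnt 0) /
      ((1 - p) + 0 * p + 2 * (1 - 0) * p)) = fun p : ℝ => binEnt p / (1 + p) := by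
    funext p
    rw [h0]
    norm_num
    congr 1
    ring
  rw [hfun]

/-- For all `δ ∈ [0,1]`, the noisy capacity is at most the noiseless capacity
`C(0) = max_{0≤p≤1} h(p)/(1+p)`. -/
theorem stmt_8 (δ : ℝ) (hδ : δ ∈ Set.Icc (0 : ℝ) 1) :
    Cnoisy δ ≤ Cnoisy 0 ∧
      Cnoisy 0 = sSup ((fun p : ℝ => binEnt p / (1 + p)) '' Set.Icc 0 1) := by
  obtain ⟨hδ0, hδ1⟩ := hδ
  refine ⟨?_, noiseless_eq⟩
  rw [noiseless_eq]
  set S := (fun p : ℝ => binEnt p / (1 + p)) '' Set.Icc 0 1 with hS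
  have hcont : ContinuousOn (fun p : ℝ => binEnt p / (1 + p)) (Set.Icc 0 1) := by
    apply ContinuousOn.div binEnt_continuous.continuousOn
      (continuous_const.add continuous_id).continuousOn
    intro x hx
    have := hx.1
    intro h
    have h : 1 + x = 0 := h
    linarith
  have hbdd : BddAbove S :=
    (isCompact_Icc.image_of_continuousOn hcont).bddAbove
  have h0mem : (0 : ℝ) ∈ S := by
    refine ⟨0, by norm_num, ?_⟩
    simp [binEnt]
  have hSnonneg : 0 ≤ sSup S := le_csSup hbdd h0mem
  apply Real.sSup_le _ hSnonneg
  rintro x ⟨p, ⟨hp0, hp1⟩, rfl⟩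
  set q := (1 - δ) * p with hq
  have hq0 : 0 ≤ q := mul_nonneg (by linarith) hp0
  have hq1 : q ≤ 1 := by nlinarith
  have hden : (1 - p) + δ * p + 2 * (1 - δ) * p = 1 + q := by rw [hq]; ring
  have hstep : (binEnt ((1 - δ) * p) - p * binEnt δ) / ((1 - p) + δ * p + 2 * (1 - δ) * p)
      ≤ binEnt q / (1 + q) := by
    rw [hden]
    apply div_le_div_of_nonneg_right ?_ (by linarith) |>.trans_eq rfl
    · have := binEnt_nonneg hδ0 hδ1
      nlinarith
  refine hstep.trans (le_csSup hbdd ⟨q, ⟨hq0, hq1⟩, rfl⟩)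
end

section
/- Among all binary prefix codebooks with M codewords (M >= 2), a codebook minimizing the total cost sum eta(x) = sum (2*n_1(x)+n_0(x)) can be obtained greedily: start from {0,1} and repeatedly replace a minimum-cost codeword by its two children until M codewords are obtained. -/
/-- Cost of a binary codeword: 2·(number of ones) + (number of zeros). -/
def eta (x : List Bool) : ℕ := 2 * x.count true + x.count false

/-- Total cost of a codebook. -/
def codebookCost (C : Finset (List Bool)) : ℕ := ∑ x ∈ C, eta x

/-- A codebook is prefix-free: no codeword is a proper prefix of another. -/
def PrefixFree (C : Finset (List Bool)) : Prop :=
  ∀ x ∈ C, ∀ y ∈ C, x ≠ y → ¬ x <+: y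

/-- One greedy step: replace a minimum-cost codeword by its two children. -/
def GreedyStep (C C' : Finset (List Bool)) : Prop :=
  ∃ x ∈ C, (∀ y ∈ C, eta x ≤ eta y) ∧
    C' = (C.erase x) ∪ {x ++ [false], x ++ [true]}

lemma eta_append (a b : List Bool) : eta (a ++ b) = eta a + eta b := by
  simp [eta, List.count_append]; ring

lemma eta_false (w : List Bool) : eta (w ++ [false]) = eta w + 1 := by
  simp [eta_append]; rfl

lemma eta_true (w : List Bool) : eta (w ++ [true]) = eta w + 2 := by
  simp [eta_append]; rfl

lemma eta_prefix_le {u v : List Bool} (h : u <+: v) : eta u ≤ eta v := by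
  obtain ⟨t, rfl⟩ := h
  simp [eta_append]

lemma exists_step_prefix {u v : List Bool} (h : u <+: v) (hne : u ≠ v) :
    ∃ b, u ++ [b] <+: v := by
  obtain ⟨t, rfl⟩ := h
  cases t with
  | nil => simp at hne
  | cons b t' => exact ⟨b, t', by simp⟩

/-- prefix-closed -/

def PC (N : Finset (List Bool)) : Prop := ∀ v ∈ N, ∀ u, u <+: v → u ∈ N

def HInv (N : Finset (List Bool)) : Prop :=
  ∀ z ∈ N, ∀ w ∈ N, ∀ b : Bool, w ++ [b] ∉ N → eta z ≤ eta (w ++ [b])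

def Frontier (N : Finset (List Bool)) : Finset (List Bool) :=
  (N.image (· ++ [false]) ∪ N.image (· ++ [true])) \ N

lemma mem_frontier {N : Finset (List Bool)} {y : List Bool} :
    y ∈ Frontier N ↔ (∃ w ∈ N, ∃ b : Bool, y = w ++ [b]) ∧ y ∉ N := by
  simp only [Frontier, Finset.mem_sdiff, Finset.mem_union, Finset.mem_image]
  constructor
  · rintro ⟨h1 | h1, h2⟩ <;> obtain ⟨w, hw, rfl⟩ := h1
    · exact ⟨⟨w, hw, false, rfl⟩, h2⟩
    · exact ⟨⟨w, hw, true, rfl⟩, h2⟩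
  · rintro ⟨⟨w, hw, b, rfl⟩, h2⟩
    refine ⟨?_, h2⟩
    cases b
    · exact Or.inl ⟨w, hw, rfl⟩
    · exact Or.inr ⟨w, hw, rfl⟩

lemma first_prefix {N : Finset (List Bool)} (hPC : PC N) (hnil : [] ∈ N) :
    ∀ y : List Bool, y ∉ N → ∃ f ∈ Frontier N, f <+: y := by
  intro y
  induction y using List.reverseRec with
  | nil => intro h; exact absurd hnil h
  | append_singleton w b ih =>
    intro h
    by_cases hw : w ∈ N
    · exact ⟨w ++ [b], mem_frontier.mpr ⟨⟨w, hw, b, rfl⟩, h⟩, List.prefix_refl _⟩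
    · obtain ⟨f, hf, hpre⟩ := ih hw
      exact ⟨f, hf, hpre.trans (List.prefix_append _ _)⟩

lemma min_prop {N : Finset (List Bool)} (hPC : PC N) (hnil : [] ∈ N) (hH : HInv N) :
    ∀ z ∈ N, ∀ y, y ∉ N → eta z ≤ eta y := by
  intro z hz y hy
  obtain ⟨f, hf, hpre⟩ := first_prefix hPC hnil y hy
  obtain ⟨⟨w, hw, b, rfl⟩, hfn⟩ := mem_frontier.mp hf
  exact (hH z hz w hw b hfn).trans (eta_prefix_le hpre)

lemma sum_le_sum_card {S T : Finset (List Bool)} (hcard : S.card = T.card)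
    (h : ∀ s ∈ S, ∀ t ∈ T, eta s ≤ eta t) :
    ∑ s ∈ S, eta s ≤ ∑ t ∈ T, eta t := by
  rcases T.eq_empty_or_nonempty with rfl | hT
  · simp at hcard; simp [hcard]
  · obtain ⟨t0, ht0, hmin⟩ := T.exists_min_image eta hT
    calc ∑ s ∈ S, eta s ≤ S.card • eta t0 :=
          Finset.sum_le_card_nsmul _ _ _ (fun s hs => h s hs t0 ht0)
      _ = T.card • eta t0 := by rw [hcard]
      _ ≤ ∑ t ∈ T, eta t := Finset.card_nsmul_le_sum _ _ _ (fun t ht => hmin t ht)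

lemma compare_sums {N A : Finset (List Bool)} (hcard : N.card = A.card)
    (hmin : ∀ z ∈ N, ∀ y, y ∉ N → eta z ≤ eta y) :
    ∑ z ∈ N, eta z ≤ ∑ y ∈ A, eta y := by
  have h1 : ∑ z ∈ N \ (N ∩ A), eta z + ∑ z ∈ N ∩ A, eta z = ∑ z ∈ N, eta z :=
    Finset.sum_sdiff Finset.inter_subset_left
  have h2 : ∑ z ∈ A \ (A ∩ N), eta z + ∑ z ∈ A ∩ N, eta z = ∑ z ∈ A, eta z :=
    Finset.sum_sdiff Finset.inter_subset_left
  rw [Finset.sdiff_inter_self_left] at h1 h2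
  rw [Finset.inter_comm A N] at h2
  have hc : (N \ A).card = (A \ N).card := by
    have e1 := Finset.card_inter_add_card_sdiff N A
    have e2 := Finset.card_inter_add_card_sdiff A N
    rw [Finset.inter_comm A N] at e2
    omega
  have key : ∑ z ∈ N \ A, eta z ≤ ∑ z ∈ A \ N, eta z := by
    apply sum_le_sum_card hc
    intro s hs t ht
    exact hmin s (Finset.mem_sdiff.mp hs).1 t (Finset.mem_sdiff.mp ht).2
  omega

lemma greedy_inv {C : Finset (List Bool)}
    (h : Relation.ReflTransGen GreedyStep {[false], [true]} C) :
    ∃ N : Finset (List Bool), PC N ∧ [] ∈ N ∧ HInv N ∧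
      N.card + 1 = C.card ∧ C = Frontier N ∧
      codebookCost C = ∑ z ∈ N, (eta z + 3) := by
  induction h with
  | refl =>
    refine ⟨{[]}, ?_, Finset.mem_singleton_self _, ?_, ?_, ?_, ?_⟩
    · intro v hv u hu
      simp only [Finset.mem_singleton] at *
      subst hv
      simpa using List.prefix_nil.mp hu
    · intro z hz w hw b hb
      simp only [Finset.mem_singleton] at hz
      subst hz
      simp [eta]
    · decide
    · decide
    · decide
  | @tail B C2 hsteps hstep ih =>
    obtain ⟨N, hPC, hnil, hH, hcard, hfr, hcost⟩ := ih
    obtain ⟨x, hxC, hmin, rfl⟩ := hstep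
    have hxF : x ∈ Frontier N := hfr ▸ hxC
    obtain ⟨⟨w, hwN, b, hxw⟩, hxN⟩ := mem_frontier.mp hxF
    have child_not_mem : ∀ b' : Bool, x ++ [b'] ∉ N := by
      intro b' hmem
      exact hxN (hPC _ hmem x (List.prefix_append _ _))
    have child_ne_x : ∀ b' : Bool, x ++ [b'] ≠ x := by
      intro b' he
      have := congrArg List.length he
      simp at this
    have child_not_frontier : ∀ b' : Bool, x ++ [b'] ∉ Frontier N := by
      intro b' hmem
      obtain ⟨⟨w2, hw2, b2, he⟩, -⟩ := mem_frontier.mp hmem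
      rw [← List.concat_eq_append, ← List.concat_eq_append, List.concat_inj] at he
      exact hxN (he.1 ▸ hw2)
    have hx0ne1 : x ++ [false] ≠ x ++ [true] := by
      rw [← List.concat_eq_append, ← List.concat_eq_append, Ne, List.concat_inj]
      rintro ⟨-, h⟩; exact Bool.false_ne_true h
    have hetax : ∀ z ∈ N, eta z ≤ eta x := by
      intro z hz
      rw [hxw]
      exact hH z hz w hwN b (hxw ▸ hxN)
    refine ⟨insert x N, ?_, Finset.mem_insert_of_mem hnil, ?_, ?_, ?_, ?_⟩
    · -- PC
      intro v hv u hu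
      rcases Finset.mem_insert.mp hv with rfl | hv
    
      · rw [hxw, List.prefix_concat_iff] at hu
        rcases hu with rfl | hu
        · exact hxw ▸ Finset.mem_insert_self _ _
        · exact Finset.mem_insert_of_mem (hPC w hwN u hu)
      · exact Finset.mem_insert_of_mem (hPC v hv u hu)
    · -- HInv
      intro z hz w2 hw2 b2 hnm
      have hfmem : w2 ∈ N → w2 ++ [b2] ∈ Frontier N := by
        intro hw2N
        refine mem_frontier.mpr ⟨⟨w2, hw2N, b2, rfl⟩, ?_⟩
        intro hk
        exact hnm (Finset.mem_insert_of_mem hk)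
      rcases Finset.mem_insert.mp hz with rfl | hz <;>
        rcases Finset.mem_insert.mp hw2 with heq | hw2
      · -- z = x, w2 = x
        rw [heq, eta_append]; omega
      · -- z = x, w2 ∈ N
        exact hmin _ (hfr ▸ hfmem hw2)
      · -- z ∈ N, w2 = x
        rw [heq]
        calc eta z ≤ eta x := hetax z hz
          _ ≤ eta (x ++ [b2]) := by rw [eta_append]; omega
      · -- z ∈ N, w2 ∈ N
        exact hH z hz w2 hw2 b2 (fun hk => hnm (Finset.mem_insert_of_mem hk))
    · -- card
      rw [Finset.card_insert_of_notMem hxN]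
      have hdisj : Disjoint (B.erase x) ({x ++ [false], x ++ [true]} : Finset (List Bool)) := by
        simp only [Finset.disjoint_right, Finset.mem_insert, Finset.mem_singleton]
        rintro a (rfl | rfl) hmem <;>
          exact child_not_frontier _ (hfr ▸ Finset.mem_of_mem_erase hmem)
      rw [Finset.card_union_of_disjoint hdisj, Finset.card_erase_of_mem hxC,
        Finset.card_pair hx0ne1]
      have : 1 ≤ B.card := Finset.card_pos.mpr ⟨x, hxC⟩
      omega
    · -- C' = Frontier (insert x N)
      ext y
      simp only [Finset.mem_union, Finset.mem_erase, Finset.mem_insert, Finset.mem_singleton]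
      rw [mem_frontier]
      constructor
      · rintro (⟨hne, hyC⟩ | rfl | rfl)
        · obtain ⟨⟨w2, hw2, b2, rfl⟩, hyN⟩ := mem_frontier.mp (hfr ▸ hyC)
          refine ⟨⟨w2, Finset.mem_insert_of_mem hw2, b2, rfl⟩, ?_⟩
          simp only [Finset.mem_insert]
          rintro (h | h)
          · exact hne h
          · exact hyN h
        · refine ⟨⟨x, Finset.mem_insert_self _ _, false, rfl⟩, ?_⟩
          simp only [Finset.mem_insert]
          rintro (h | h)
          · exact child_ne_x _ h
          · exact child_not_mem _ h
        · refine ⟨⟨x, Finset.mem_insert_self _ _, true, rfl⟩, ?_⟩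
          simp only [Finset.mem_insert]
          rintro (h | h)
          · exact child_ne_x _ h
          · exact child_not_mem _ h
      · rintro ⟨⟨w2, hw2, b2, rfl⟩, hyN'⟩
        simp only [Finset.mem_insert] at hyN'
        push_neg at hyN'
        rcases Finset.mem_insert.mp hw2 with rfl | hw2
        · cases b2
          · exact Or.inr (Or.inl rfl)
          · exact Or.inr (Or.inr rfl)
        · refine Or.inl ⟨hyN'.1, hfr ▸ mem_frontier.mpr ⟨⟨w2, hw2, b2, rfl⟩, hyN'.2⟩⟩
    · -- cost
      have hdisj : Disjoint (B.erase x) ({x ++ [false], x ++ [true]} : Finset (List Bool)) := by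
        simp only [Finset.disjoint_right, Finset.mem_insert, Finset.mem_singleton]
        rintro a (rfl | rfl) hmem <;>
          exact child_not_frontier _ (hfr ▸ Finset.mem_of_mem_erase hmem)
      have e1 : ∑ z ∈ B.erase x, eta z + eta x = codebookCost B :=
        Finset.sum_erase_add B eta hxC
      rw [codebookCost, Finset.sum_union hdisj, Finset.sum_pair hx0ne1,
        Finset.sum_insert hxN, eta_false, eta_true]
      rw [hcost] at e1
      omega

lemma BR (n : ℕ) : ∀ C' : Finset (List Bool), (∑ y ∈ C', y.length) = n →
    PrefixFree C' → C'.Nonempty →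
    ∃ A : Finset (List Bool), A.card + 1 = C'.card ∧
      (∀ u ∈ A, ∃ y ∈ C', u <+: y ∧ u ≠ y) ∧
      ∑ u ∈ A, (eta u + 3) ≤ codebookCost C' := by
  induction n using Nat.strong_induction_on with
  | _ n ih =>
  intro C' hlen hpf hne
  by_cases hcard1 : C'.card = 1
  · exact ⟨∅, by simp [hcard1], by simp, by simp [codebookCost]⟩
  have hcard2 : 2 ≤ C'.card := by
    have h0 : 0 < C'.card := Finset.card_pos.mpr hne
    omega
  have hnonnil : ∀ y ∈ C', y ≠ [] := by
    intro y hy hynil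
    obtain ⟨a, ha, b', hb', hab⟩ := Finset.one_lt_card.mp (show 1 < C'.card by omega)
    have : ∃ z ∈ C', z ≠ y := by
      by_cases hay : a = y
      · exact ⟨b', hb', fun h => hab (h ▸ hay)⟩
      · exact ⟨a, ha, hay⟩
    obtain ⟨z, hz, hzy⟩ := this
    exact hpf y hy z hz (fun h => hzy h.symm) (hynil ▸ List.nil_prefix)
  obtain ⟨x, hx, hmax⟩ := C'.exists_max_image List.length hne
  obtain hxnil | ⟨w, b, hxw⟩ := x.eq_nil_or_concat
  · exact absurd hxnil (hnonnil x hx)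
  rw [List.concat_eq_append] at hxw
  subst hxw
  have hlenx : (w ++ [b]).length = w.length + 1 := by simp
  have hwC : w ∉ C' := by
    intro hw
    exact hpf w hw (w ++ [b]) hx (by simp) (List.prefix_append _ _)
  have hpre_ne : ∀ (u : List Bool) (b' : Bool), u <+: w → u ≠ w ++ [b'] := by
    intro u b' hu he
    have := hu.length_le
    rw [he] at this
    simp at this
  by_cases hsib : ∃ y ∈ C', (w ++ [!b]) <+: y
  · -- sibling present: contract the pair
    obtain ⟨y, hy, hysib⟩ := hsib
    have hylen : y = w ++ [!b] := by
      have h1 := hysib.length_le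
      have h2 := hmax y hy
      rw [hlenx] at h2
      simp only [List.length_append, List.length_cons, List.length_nil] at h1
      exact (hysib.eq_of_length (by simp; omega)).symm
    subst hylen
    have h0 : w ++ [false] ∈ C' := by
      cases b with
      | false => exact hx
      | true => simpa using hy
    have h1 : w ++ [true] ∈ C' := by
      cases b with
      | false => simpa using hy
      | true => exact hx
    set E := (C'.erase (w ++ [false])).erase (w ++ [true]) with hE
    have h1e : w ++ [true] ∈ C'.erase (w ++ [false]) :=
      Finset.mem_erase.mpr ⟨by simp, h1⟩
    have hwE : w ∉ E := by
      intro h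
      exact hwC (Finset.mem_of_mem_erase (Finset.mem_of_mem_erase h))
    have hEmem : ∀ v ∈ E, v ∈ C' ∧ v ≠ w ++ [false] ∧ v ≠ w ++ [true] := by
      intro v hv
      obtain ⟨h2, h3⟩ := Finset.mem_erase.mp hv
      obtain ⟨h4, h5⟩ := Finset.mem_erase.mp h3
      exact ⟨h5, h4, h2⟩
    have hnopre : ∀ v ∈ E, ¬ w <+: v := by
      intro v hv hpre
      obtain ⟨hvC, hv0, hv1⟩ := hEmem v hv
      have hvw : v ≠ w := fun h => hwC (h ▸ hvC)
      obtain ⟨b', hb'⟩ := exists_step_prefix hpre (fun h => hvw h.symm)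
      cases b'
      · exact hpf (w ++ [false]) h0 v hvC (fun h => hv0 h.symm) hb'
      · exact hpf (w ++ [true]) h1 v hvC (fun h => hv1 h.symm) hb'
    have hpfE : PrefixFree (insert w E) := by
      intro u hu v hv hunev hpre
      rcases Finset.mem_insert.mp hu with hue | hu <;>
        rcases Finset.mem_insert.mp hv with hve | hv
      · exact hunev (hue.trans hve.symm)
      · exact hnopre v hv (hue ▸ hpre)
      · -- u ∈ E, v = w
        obtain ⟨huC, -, -⟩ := hEmem u hu
        have hpre' : u <+: w := hve ▸ hpre
        exact hpf u huC (w ++ [false]) h0 (hpre_ne u false hpre')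
          (hpre'.trans (List.prefix_append _ _))
      · obtain ⟨huC, -, -⟩ := hEmem u hu
        obtain ⟨hvC, -, -⟩ := hEmem v hv
        exact hpf u huC v hvC hunev hpre
    -- sums and cards
    have hsum1 : ∑ z ∈ E, z.length + (w ++ [true]).length
        = ∑ z ∈ C'.erase (w ++ [false]), z.length :=
      Finset.sum_erase_add _ _ h1e
    have hsum2 : ∑ z ∈ C'.erase (w ++ [false]), z.length + (w ++ [false]).length
        = ∑ z ∈ C', z.length :=
      Finset.sum_erase_add _ _ h0
    have hsumE1 : ∑ z ∈ E, eta z + eta (w ++ [true])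
        = ∑ z ∈ C'.erase (w ++ [false]), eta z :=
      Finset.sum_erase_add _ _ h1e
    have hsumE2 : ∑ z ∈ C'.erase (w ++ [false]), eta z + eta (w ++ [false])
        = ∑ z ∈ C', eta z :=
      Finset.sum_erase_add _ _ h0
    have hc1 : (C'.erase (w ++ [false])).card + 1 = C'.card :=
      Finset.card_erase_add_one h0
    have hc2 : E.card + 1 = (C'.erase (w ++ [false])).card :=
      Finset.card_erase_add_one h1e
    have hlt : ∑ z ∈ insert w E, z.length < n := by
      rw [Finset.sum_insert hwE]
      simp only [List.length_append, List.length_cons, List.length_nil] at hsum1 hsum2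
      omega
    obtain ⟨A'', hcA, hpreA, hcostA⟩ := ih _ hlt (insert w E) rfl hpfE ⟨w, Finset.mem_insert_self _ _⟩
    have hwA : w ∉ A'' := by
      intro hw
      obtain ⟨y, hy, hpre, hne'⟩ := hpreA w hw
      rcases Finset.mem_insert.mp hy with hye | hy
      · exact hne' hye.symm
      · exact hnopre y hy hpre
    refine ⟨insert w A'', ?_, ?_, ?_⟩
    · rw [Finset.card_insert_of_notMem hwA]
      rw [Finset.card_insert_of_notMem hwE] at hcA
      omega
    · intro u hu
      rcases Finset.mem_insert.mp hu with hue | hu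
      · exact hue ▸ ⟨w ++ [false], h0, List.prefix_append _ _, hpre_ne w false (List.prefix_refl _)⟩
      · obtain ⟨y, hy, hpre, hne'⟩ := hpreA u hu
        rcases Finset.mem_insert.mp hy with hye | hy
        · have hpre' : u <+: w := hye ▸ hpre
          exact ⟨w ++ [false], h0, hpre'.trans (List.prefix_append _ _), hpre_ne u false hpre'⟩
        · exact ⟨y, (hEmem y hy).1, hpre, hne'⟩
    · rw [Finset.sum_insert hwA]
      have hcostE : codebookCost (insert w E) = ∑ z ∈ E, eta z + eta w := by
        rw [codebookCost, Finset.sum_insert hwE]; omega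
      rw [hcostE] at hcostA
      have he0 := eta_false w
      have he1 := eta_true w
      rw [codebookCost]
      omega
  · -- no sibling: shorten x to w
    have hxE : (w ++ [b]) ∈ C' := hx
    set E := C'.erase (w ++ [b]) with hE
    have hwE : w ∉ E := fun h => hwC (Finset.mem_of_mem_erase h)
    have hpfE : PrefixFree (insert w E) := by
      intro u hu v hv hunev hpre
      rcases Finset.mem_insert.mp hu with hue | hu <;>
        rcases Finset.mem_insert.mp hv with hve | hv
      · exact hunev (hue.trans hve.symm)
      · -- w <+: v, v ∈ E
        obtain ⟨hvne, hvC⟩ := Finset.mem_erase.mp hv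
        have hpre' : w <+: v := hue ▸ hpre
        have hvw : v ≠ w := fun h => hwC (h ▸ hvC)
        obtain ⟨b', hb'⟩ := exists_step_prefix hpre' (fun h => hvw h.symm)
        by_cases hbb : b' = b
        · subst hbb
          exact hpf (w ++ [b']) hx v hvC (fun h => hvne h.symm) hb'
        · have hbn : b' = !b := by
            cases b <;> cases b' <;> simp_all
          subst hbn
          exact hsib ⟨v, hvC, hb'⟩
      · obtain ⟨hune, huC⟩ := Finset.mem_erase.mp hu
        have hpre' : u <+: w := hve ▸ hpre
        exact hpf u huC (w ++ [b]) hx hune (hpre'.trans (List.prefix_append _ _))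
      · obtain ⟨-, huC⟩ := Finset.mem_erase.mp hu
        obtain ⟨-, hvC⟩ := Finset.mem_erase.mp hv
        exact hpf u huC v hvC hunev hpre
    have hsum1 : ∑ z ∈ E, z.length + (w ++ [b]).length
        = ∑ z ∈ C', z.length :=
      Finset.sum_erase_add _ _ hxE
    have hsumE1 : ∑ z ∈ E, eta z + eta (w ++ [b]) = ∑ z ∈ C', eta z :=
      Finset.sum_erase_add _ _ hxE
    have hc1 : E.card + 1 = C'.card := Finset.card_erase_add_one hxE
    have hlt : ∑ z ∈ insert w E, z.length < n := by
      rw [Finset.sum_insert hwE]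
      simp only [List.length_append, List.length_cons, List.length_nil] at hsum1
      omega
    obtain ⟨A'', hcA, hpreA, hcostA⟩ := ih _ hlt (insert w E) rfl hpfE ⟨w, Finset.mem_insert_self _ _⟩
    refine ⟨A'', ?_, ?_, ?_⟩
    · rw [Finset.card_insert_of_notMem hwE] at hcA
      omega
    · intro u hu
      obtain ⟨y, hy, hpre, hne'⟩ := hpreA u hu
      rcases Finset.mem_insert.mp hy with hye | hy
      · have hpre' : u <+: w := hye ▸ hpre
        exact ⟨w ++ [b], hx, hpre'.trans (List.prefix_append _ _), hpre_ne u b hpre'⟩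
      · exact ⟨y, Finset.mem_of_mem_erase hy, hpre, hne'⟩
    · have hcostE : codebookCost (insert w E) = ∑ z ∈ E, eta z + eta w := by
        rw [codebookCost, Finset.sum_insert hwE]; omega
      rw [hcostE] at hcostA
      have hew : eta w ≤ eta (w ++ [b]) := by
        cases b
        · rw [eta_false]; omega
        · rw [eta_true]; omega
      rw [codebookCost]
      omega

/-- Any codebook of size `M ≥ 2` obtained by the greedy procedure starting from
`{0, 1}` has minimal total cost among all prefix-free codebooks with `M` codewords. -/
theorem stmt_11 (M : ℕ) (hM : 2 ≤ M) (C : Finset (List Bool))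
    (hgreedy : Relation.ReflTransGen GreedyStep {[false], [true]} C)
    (hcard : C.card = M) :
    ∀ C' : Finset (List Bool), PrefixFree C' → C'.card = M →
      codebookCost C ≤ codebookCost C' := by
  intro C' hpf' hcard'
  obtain ⟨N, hPC, hnil, hH, hcardN, hfr, hcost⟩ := greedy_inv hgreedy
  have hne' : C'.Nonempty := Finset.card_pos.mp (by omega)
  obtain ⟨A, hcA, hpreA, hcostA⟩ := BR _ C' rfl hpf' hne'
  have hcards : N.card = A.card := by omega
  have hcomp : ∑ z ∈ N, eta z ≤ ∑ u ∈ A, eta u :=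
    compare_sums hcards (min_prop hPC hnil hH)
  have e1 : ∑ z ∈ N, (eta z + 3) = ∑ z ∈ N, eta z + 3 * N.card := by
    rw [Finset.sum_add_distrib, Finset.sum_const, smul_eq_mul]
    ring
  have e2 : ∑ u ∈ A, (eta u + 3) = ∑ u ∈ A, eta u + 3 * A.card := by
    rw [Finset.sum_add_distrib, Finset.sum_const, smul_eq_mul]
    ring
  omega
end

section
/- The supremum over p in (0,1) of lim_{l->infinity} log2(C(l, floor(l*p)))/(l + floor(l*p)) equals max_{0<=p<=1} h(p)/(1+p) = log2((1+sqrt(5))/2); hence finite-length codes with fixed Hamming-weight codewords asymptotically achieve the noiseless covert channel capacity. -/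
open Filter

namespace Stmt16

open Real Stirling

/-- The golden ratio. -/
noncomputable def phi : ℝ := (1 + Real.sqrt 5) / 2

lemma sqrt5_sq : Real.sqrt 5 ^ 2 = 5 := Real.sq_sqrt (by norm_num)

lemma sqrt5_lt : Real.sqrt 5 < 3 := by
  nlinarith [sqrt5_sq, Real.sqrt_nonneg (5 : ℝ)]

lemma one_lt_sqrt5 : (1 : ℝ) < Real.sqrt 5 := by
  nlinarith [sqrt5_sq, Real.sqrt_nonneg (5 : ℝ)]

lemma one_lt_phi : (1 : ℝ) < phi := by
  unfold phi; linarith [one_lt_sqrt5]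

lemma phi_pos : (0 : ℝ) < phi := lt_trans one_pos one_lt_phi

lemma phi_sq : phi ^ 2 = phi + 1 := by
  unfold phi; nlinarith [sqrt5_sq]

/-- The maximizing parameter. -/
noncomputable def qq : ℝ := 2 - phi

lemma qq_pos : 0 < qq := by unfold qq phi; linarith [sqrt5_lt]

lemma qq_lt_one : qq < 1 := by unfold qq; linarith [one_lt_phi]

lemma qq_mem : qq ∈ Set.Ioo (0 : ℝ) 1 := ⟨qq_pos, qq_lt_one⟩

lemma qq_mul : qq * phi ^ 2 = 1 := by
  rw [phi_sq]; unfold qq; nlinarith [phi_sq]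

lemma one_sub_qq_mul : (1 - qq) * phi = 1 := by
  unfold qq; nlinarith [phi_sq]

lemma log_qq : Real.log qq = -(2 * Real.log phi) := by
  have h : qq = (phi ^ 2)⁻¹ := eq_inv_of_mul_eq_one_left qq_mul
  rw [h, Real.log_inv, Real.log_pow]
  push_cast; ring

lemma log_one_sub_qq : Real.log (1 - qq) = -Real.log phi := by
  have h : 1 - qq = phi⁻¹ := eq_inv_of_mul_eq_one_left one_sub_qq_mul
  rw [h, Real.log_inv]

lemma log_phi_pos : 0 < Real.log phi := Real.log_pos one_lt_phi

/-- Natural-log binary entropy. -/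
noncomputable def H (p : ℝ) : ℝ := -p * Real.log p - (1 - p) * Real.log (1 - p)

lemma binEnt_eq (p : ℝ) : binEnt p = H p / Real.log 2 := by
  unfold binEnt H Real.logb; ring

lemma H_le {p : ℝ} (hp : p ∈ Set.Icc (0 : ℝ) 1) : H p ≤ (1 + p) * Real.log phi := by
  obtain ⟨hp0, hp1⟩ := hp
  rcases eq_or_lt_of_le hp0 with h0 | h0
  · rw [← h0]; unfold H; simp [Real.log_one]
    linarith [log_phi_pos]
  rcases eq_or_lt_of_le hp1 with h1 | h1
  · rw [h1]; unfold H; simp [Real.log_one]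
    linarith [log_phi_pos]
  -- interior case, Gibbs' inequality with q = qq
  have key : (1 + p) * Real.log phi = -p * Real.log qq - (1 - p) * Real.log (1 - qq) := by
    rw [log_qq, log_one_sub_qq]; ring
  rw [key]
  have hq0 := qq_pos
  have hq1 := qq_lt_one
  have hb1 : Real.log (qq / p) ≤ qq / p - 1 :=
    Real.log_le_sub_one_of_pos (by positivity)
  have hb2 : Real.log ((1 - qq) / (1 - p)) ≤ (1 - qq) / (1 - p) - 1 :=
    Real.log_le_sub_one_of_pos (div_pos (by linarith) (by linarith))
  have e1 : Real.log (qq / p) = Real.log qq - Real.log p :=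
    Real.log_div (ne_of_gt hq0) (ne_of_gt h0)
  have e2 : Real.log ((1 - qq) / (1 - p)) = Real.log (1 - qq) - Real.log (1 - p) :=
    Real.log_div (by linarith) (by linarith)
  have c1 : p * Real.log (qq / p) ≤ p * (qq / p - 1) :=
    mul_le_mul_of_nonneg_left hb1 (le_of_lt h0)
  have c2 : (1 - p) * Real.log ((1 - qq) / (1 - p)) ≤ (1 - p) * ((1 - qq) / (1 - p) - 1) :=
    mul_le_mul_of_nonneg_left hb2 (by linarith)
  have d1 : p * (qq / p - 1) = qq - p := by field_simp
  have d2 : (1 - p) * ((1 - qq) / (1 - p) - 1) = p - qq := by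
    have : (1 : ℝ) - p ≠ 0 := by linarith
    field_simp
    ring
  rw [e1] at c1; rw [e2] at c2; rw [d1] at c1; rw [d2] at c2
  unfold H; nlinarith [c1, c2]

lemma g_ub {p : ℝ} (hp : p ∈ Set.Icc (0 : ℝ) 1) :
    binEnt p / (1 + p) ≤ Real.logb 2 phi := by
  have hp1 : (0 : ℝ) < 1 + p := by linarith [hp.1]
  rw [div_le_iff₀ hp1, binEnt_eq, Real.logb]
  have hlog2 : (0 : ℝ) < Real.log 2 := Real.log_pos (by norm_num)
  rw [div_mul_eq_mul_div, div_le_div_iff₀ hlog2 hlog2]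
  have := H_le hp
  nlinarith [this, hlog2]

lemma H_qq : H qq = (1 + qq) * Real.log phi := by
  unfold H; rw [log_qq, log_one_sub_qq]; ring

lemma g_at_qq : binEnt qq / (1 + qq) = Real.logb 2 phi := by
  rw [binEnt_eq, H_qq, Real.logb]
  have h1 : (0 : ℝ) < 1 + qq := by linarith [qq_pos]
  field_simp

lemma isGreatest_B :
    IsGreatest ((fun p : ℝ => binEnt p / (1 + p)) '' Set.Icc 0 1) (Real.logb 2 phi) := by
  constructor
  · exact ⟨qq, ⟨le_of_lt qq_pos, le_of_lt qq_lt_one⟩, g_at_qq⟩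
  · rintro y ⟨p, hp, rfl⟩
    exact g_ub hp

/-! ### The Stirling part -/

/-- Error term in Stirling's formula. -/
noncomputable def E (n : ℕ) : ℝ :=
  Real.log (stirlingSeq n) + Real.log (Real.sqrt (2 * n))

lemma log_factorial {n : ℕ} (hn : 1 ≤ n) :
    Real.log (n.factorial) = E n + n * (Real.log n - 1) := by
  have h := Stirling.log_stirlingSeq_formula n
  have hs : Real.log (Real.sqrt (2 * n)) = 1 / 2 * Real.log (2 * n) := by
    rw [Real.log_sqrt (by positivity)]; ring
  have hn0 : (0 : ℝ) < n := by exact_mod_cast hn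
  have hlog : Real.log ((n : ℝ) / Real.exp 1) = Real.log n - 1 := by
    rw [Real.log_div (ne_of_gt hn0) (Real.exp_ne_zero 1), Real.log_exp]
  unfold E; rw [h, hs, hlog]; ring

lemma log_choose {n k : ℕ} (hk : 0 < k) (hkn : k < n) :
    Real.log (n.choose k) =
      (E n - E k - E (n - k)) +
        ((n : ℝ) * Real.log n - (k : ℝ) * Real.log k
          - ((n - k : ℕ) : ℝ) * Real.log ((n - k : ℕ) : ℝ)) := by
  have h0 : (n.choose k : ℝ) * (k.factorial : ℝ) * ((n - k).factorial : ℝ) = (n.factorial : ℝ) := by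
    exact_mod_cast congrArg (Nat.cast (R := ℝ))
      (Nat.choose_mul_factorial_mul_factorial hkn.le)
  have hkf : (k.factorial : ℝ) ≠ 0 := by positivity
  have hnkf : ((n - k).factorial : ℝ) ≠ 0 := by positivity
  have hc : (n.choose k : ℝ) = (n.factorial : ℝ) / ((k.factorial : ℝ) * ((n - k).factorial : ℝ)) := by
    field_simp
    linarith [h0]
  rw [hc, Real.log_div (by positivity) (by positivity),
    Real.log_mul hkf hnkf,
    log_factorial (by omega : 1 ≤ n),
    log_factorial hk, log_factorial (by omega : 1 ≤ n - k)]
  have hcast : ((n - k : ℕ) : ℝ) = (n : ℝ) - (k : ℝ) := by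
    push_cast [Nat.cast_sub hkn.le]; ring
  rw [hcast]; ring

set_option maxHeartbeats 1000000 in
/-- The main limit: the rate of the fixed-weight code tends to `binEnt p / (1+p)`. -/
lemma tendsto_rate {p : ℝ} (hp : p ∈ Set.Ioo (0 : ℝ) 1) :
    Tendsto (fun l : ℕ =>
        Real.logb 2 (l.choose ⌊(l : ℝ) * p⌋₊) / ((l : ℝ) + ⌊(l : ℝ) * p⌋₊))
      atTop (nhds (binEnt p / (1 + p))) := by
  obtain ⟨hp0, hp1⟩ := hp
  set k : ℕ → ℕ := fun l => ⌊(l : ℝ) * p⌋₊ with hk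
  -- basic facts
  have hfl_le : ∀ l : ℕ, (k l : ℝ) ≤ (l : ℝ) * p := fun l =>
    Nat.floor_le (by positivity)
  have hfl_lb : ∀ l : ℕ, (l : ℝ) * p - 1 < (k l : ℝ) := fun l => by
    have := Nat.lt_floor_add_one ((l : ℝ) * p)
    linarith
  have hk_lt : ∀ l : ℕ, 1 ≤ l → k l < l := by
    intro l hl
    have hl0 : (0 : ℝ) < l := by exact_mod_cast hl
    have : (k l : ℝ) < (l : ℝ) := lt_of_le_of_lt (hfl_le l) (by nlinarith)
    exact_mod_cast this
  -- k l → ∞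
  have hmulT : Tendsto (fun l : ℕ => (l : ℝ) * p) atTop atTop :=
    Tendsto.atTop_mul_const hp0 tendsto_natCast_atTop_atTop
  have htk : Tendsto k atTop atTop := tendsto_nat_floor_atTop.comp hmulT
  -- l - k l → ∞
  have hmulT2 : Tendsto (fun l : ℕ => (l : ℝ) * (1 - p)) atTop atTop :=
    Tendsto.atTop_mul_const (by linarith) tendsto_natCast_atTop_atTop
  have htlk : Tendsto (fun l => l - k l) atTop atTop := by
    rw [tendsto_atTop]
    intro N
    filter_upwards [hmulT2.eventually_ge_atTop (N : ℝ), eventually_ge_atTop 1] with l hl hl1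
    have hlt := hk_lt l hl1
    have hcast : ((l - k l : ℕ) : ℝ) = (l : ℝ) - (k l : ℝ) := by
      push_cast [Nat.cast_sub hlt.le]; ring
    have : (N : ℝ) ≤ ((l - k l : ℕ) : ℝ) := by
      rw [hcast]
      have := hfl_le l
      nlinarith
    exact_mod_cast this
  -- q_l → p
  have hq : Tendsto (fun l : ℕ => (k l : ℝ) / l) atTop (nhds p) := by
    apply tendsto_of_tendsto_of_tendsto_of_le_of_le'
      (g := fun l : ℕ => p - 1 / (l : ℝ)) (h := fun _ : ℕ => p)
    · simpa using tendsto_const_nhds.sub (tendsto_one_div_atTop_nhds_zero_nat (𝕜 := ℝ))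
    · exact tendsto_const_nhds
    · filter_upwards [eventually_ge_atTop 1] with l hl
      have hl0 : (0 : ℝ) < l := by exact_mod_cast hl
      rw [le_div_iff₀ hl0]
      have h1 : (1 : ℝ) / (l : ℝ) * l = 1 := by field_simp
      nlinarith [hfl_lb l, h1]
    · filter_upwards [eventually_ge_atTop 1] with l hl
      have hl0 : (0 : ℝ) < l := by exact_mod_cast hl
      rw [div_le_iff₀ hl0]
      have := hfl_le l
      nlinarith
  have hlog2 : (0 : ℝ) < Real.log 2 := Real.log_pos (by norm_num)
  -- the pieces
  set G : ℕ → ℝ := fun l => H ((k l : ℝ) / l) / (1 + (k l : ℝ) / l) with hG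
  set S : ℕ → ℝ := fun l =>
    Real.log (stirlingSeq l) - Real.log (stirlingSeq (k l))
      - Real.log (stirlingSeq (l - k l)) with hS
  set w : ℕ → ℝ := fun l =>
    Real.log (Real.sqrt (2 * l)) - Real.log (Real.sqrt (2 * (k l)))
      - Real.log (Real.sqrt (2 * ((l - k l : ℕ)))) with hw
  -- limit of G
  have hGlim : Tendsto G atTop (nhds (H p / (1 + p))) := by
    have h1 : Tendsto (fun l : ℕ => Real.log ((k l : ℝ) / l)) atTop (nhds (Real.log p)) :=
      hq.log (ne_of_gt hp0)
    have h2 : Tendsto (fun l : ℕ => 1 - (k l : ℝ) / l) atTop (nhds (1 - p)) :=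
      tendsto_const_nhds.sub hq
    have h3 : Tendsto (fun l : ℕ => Real.log (1 - (k l : ℝ) / l)) atTop
        (nhds (Real.log (1 - p))) := h2.log (by linarith)
    have hnum : Tendsto (fun l : ℕ => H ((k l : ℝ) / l)) atTop (nhds (H p)) := by
      unfold H
      exact (hq.neg.mul h1).sub (h2.mul h3)
    have hden : Tendsto (fun l : ℕ => 1 + (k l : ℝ) / l) atTop (nhds (1 + p)) :=
      tendsto_const_nhds.add hq
    exact hnum.div hden (by linarith)
  -- limit of S * (l + k l)⁻¹
  have hSlim : Tendsto S atTop (nhds (-Real.log (Real.sqrt Real.pi))) := by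
    have hpi : Real.sqrt Real.pi ≠ 0 := by positivity
    have h1 : Tendsto (fun l : ℕ => Real.log (stirlingSeq l)) atTop
        (nhds (Real.log (Real.sqrt Real.pi))) := tendsto_stirlingSeq_sqrt_pi.log hpi
    have h2 : Tendsto (fun l : ℕ => Real.log (stirlingSeq (k l))) atTop
        (nhds (Real.log (Real.sqrt Real.pi))) :=
      (tendsto_stirlingSeq_sqrt_pi.log hpi).comp htk
    have h3 : Tendsto (fun l : ℕ => Real.log (stirlingSeq (l - k l))) atTop
        (nhds (Real.log (Real.sqrt Real.pi))) :=
      (tendsto_stirlingSeq_sqrt_pi.log hpi).comp htlk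
    have := (h1.sub h2).sub h3
    convert this using 2
    ring
  have hinv : Tendsto (fun l : ℕ => ((l : ℝ) + k l)⁻¹) atTop (nhds 0) := by
    apply Tendsto.inv_tendsto_atTop
    apply tendsto_atTop_mono (fun l : ℕ => le_add_of_nonneg_right (Nat.cast_nonneg (k l)))
    exact tendsto_natCast_atTop_atTop
  have hSinv : Tendsto (fun l : ℕ => S l * ((l : ℝ) + k l)⁻¹) atTop (nhds 0) := by
    have := hSlim.mul hinv
    simpa using this
  -- limit of w / (l + k l)
  have hWlim : Tendsto (fun l : ℕ => w l / ((l : ℝ) + k l)) atTop (nhds 0) := by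
    have base : Tendsto (fun x : ℝ => Real.log x / x) atTop (nhds 0) := by
      have := Real.isLittleO_log_id_atTop.tendsto_div_nhds_zero
      simpa using this
    have comp : Tendsto (fun l : ℕ => (2 : ℝ) * l) atTop atTop := by
      apply Tendsto.const_mul_atTop (by norm_num : (0:ℝ) < 2)
      exact tendsto_natCast_atTop_atTop
    have hb : Tendsto (fun l : ℕ => 2 * (Real.log (2 * (l : ℝ)) / (2 * (l : ℝ))))
        atTop (nhds 0) := by
      have := (base.comp comp).const_mul 2
      simpa using this
    apply squeeze_zero_norm' _ hb
    filter_upwards [eventually_ge_atTop 1] with l hl1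
    have hl0 : (0 : ℝ) < l := by exact_mod_cast hl1
    have hklt := hk_lt l hl1
    have hl1' : (1 : ℝ) ≤ l := by exact_mod_cast hl1
    have hL0 : (0 : ℝ) ≤ Real.log (2 * l) := by
      apply Real.log_nonneg; nlinarith
    -- bounds on each sqrt-log term
    have hbnd : ∀ n : ℕ, n ≤ l →
        Real.log (Real.sqrt (2 * n)) ≤ Real.log (2 * l) / 2 ∧
          0 ≤ Real.log (Real.sqrt (2 * n)) := by
      intro n hn
      rcases Nat.eq_zero_or_pos n with h | h
      · subst h
        simp only [Nat.cast_zero, mul_zero, Real.sqrt_zero, Real.log_zero]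
        exact ⟨div_nonneg hL0 (by norm_num), le_refl 0⟩
      constructor
      · rw [Real.log_sqrt (by positivity)]
        have : Real.log (2 * (n : ℝ)) ≤ Real.log (2 * l) := by
          apply Real.log_le_log (by positivity)
          have : (n : ℝ) ≤ l := by exact_mod_cast hn
          linarith
        linarith
      · rw [Real.log_sqrt (by positivity)]
        have : (0:ℝ) ≤ Real.log (2 * (n : ℝ)) := by
          apply Real.log_nonneg
          have : (1 : ℝ) ≤ (n : ℝ) := by exact_mod_cast h
          nlinarith
        linarith
    obtain ⟨a1, a2⟩ := hbnd l le_rfl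
    obtain ⟨b1, b2⟩ := hbnd (k l) hklt.le
    obtain ⟨c1, c2⟩ := hbnd (l - k l) (Nat.sub_le l (k l))
    have hwb : |w l| ≤ Real.log (2 * l) := by
      rw [abs_le]
      simp only [hw]
      constructor <;> nlinarith [a1, a2, b1, b2, c1, c2]
    have hden : (0 : ℝ) < (l : ℝ) + k l := by positivity
    rw [Real.norm_eq_abs, abs_div, abs_of_pos hden]
    calc |w l| / ((l : ℝ) + k l) ≤ Real.log (2 * l) / l := by
          apply div_le_div₀ hL0 hwb hl0
          nlinarith [(Nat.cast_nonneg (k l) : (0:ℝ) ≤ (k l : ℝ))]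
      _ = 2 * (Real.log (2 * (l : ℝ)) / (2 * (l : ℝ))) := by
          field_simp
  -- eventual equality with the decomposition
  have hkey : (fun l : ℕ =>
      Real.logb 2 (l.choose (k l)) / ((l : ℝ) + k l)) =ᶠ[atTop]
      (fun l : ℕ => (G l + S l * ((l : ℝ) + k l)⁻¹ + w l / ((l : ℝ) + k l))
        * (Real.log 2)⁻¹) := by
    filter_upwards [htk.eventually_ge_atTop 1, eventually_ge_atTop 1] with l hkl1 hl1
    have hklt := hk_lt l hl1
    have hk0 : 0 < k l := hkl1
    have hl0 : (0 : ℝ) < l := by exact_mod_cast hl1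
    have hkR : (0 : ℝ) < k l := by exact_mod_cast hk0
    have hcast : ((l - k l : ℕ) : ℝ) = (l : ℝ) - (k l : ℝ) := by
      push_cast [Nat.cast_sub hklt.le]; ring
    have hlkR : (0 : ℝ) < (l : ℝ) - (k l : ℝ) := by
      have : (k l : ℝ) < l := by exact_mod_cast hklt
      linarith
    have hdenR : (0 : ℝ) < (l : ℝ) + k l := by positivity
    have hchoose := log_choose hk0 hklt
    -- the "main term" identity
    have hT : ((l : ℝ) * Real.log l - (k l : ℝ) * Real.log (k l)
        - ((l - k l : ℕ) : ℝ) * Real.log ((l - k l : ℕ) : ℝ)) / ((l : ℝ) + k l)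
          = G l := by
      rw [hcast]
      simp only [hG, H]
      have e1 : Real.log ((k l : ℝ) / l) = Real.log (k l) - Real.log l :=
        Real.log_div (ne_of_gt hkR) (ne_of_gt hl0)
      have e2 : 1 - (k l : ℝ) / l = ((l : ℝ) - k l) / l := by field_simp
      have e3 : Real.log (((l : ℝ) - k l) / l) = Real.log ((l : ℝ) - k l) - Real.log l :=
        Real.log_div (ne_of_gt hlkR) (ne_of_gt hl0)
      rw [e2, e1, e3]
      have h1k : 1 + (k l : ℝ) / l = ((l : ℝ) + k l) / l := by field_simp
      rw [h1k]
      field_simp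
      ring
    -- unfold E in the choose formula
    have hE : E l - E (k l) - E (l - k l) = S l + w l := by
      simp only [E, hS, hw]; ring
    have : Real.logb 2 (l.choose (k l)) = Real.log (l.choose (k l)) / Real.log 2 := rfl
    rw [this, hchoose, hE, ← hT]
    field_simp
    ring
  -- assemble
  have hfinal : Tendsto (fun l : ℕ =>
      (G l + S l * ((l : ℝ) + k l)⁻¹ + w l / ((l : ℝ) + k l)) * (Real.log 2)⁻¹)
      atTop (nhds ((H p / (1 + p) + 0 + 0) * (Real.log 2)⁻¹)) :=
    ((hGlim.add hSinv).add hWlim).mul_const _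
  have hval : (H p / (1 + p) + 0 + 0) * (Real.log 2)⁻¹ = binEnt p / (1 + p) := by
    rw [binEnt_eq]
    ring
  rw [hval] at hfinal
  exact Tendsto.congr' hkey.symm hfinal

lemma set_eq :
    {y : ℝ | ∃ p ∈ Set.Ioo (0 : ℝ) 1,
        Tendsto (fun l : ℕ =>
            Real.logb 2 (l.choose ⌊(l : ℝ) * p⌋₊) / ((l : ℝ) + ⌊(l : ℝ) * p⌋₊))
          atTop (nhds y)}
      = (fun p : ℝ => binEnt p / (1 + p)) '' Set.Ioo 0 1 := by
  ext y
  constructor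
  · rintro ⟨p, hp, hT⟩
    exact ⟨p, hp, (tendsto_nhds_unique hT (tendsto_rate hp)).symm⟩
  · rintro ⟨p, hp, rfl⟩
    exact ⟨p, hp, tendsto_rate hp⟩

lemma isGreatest_A :
    IsGreatest ((fun p : ℝ => binEnt p / (1 + p)) '' Set.Ioo 0 1) (Real.logb 2 phi) := by
  constructor
  · exact ⟨qq, qq_mem, g_at_qq⟩
  · rintro y ⟨p, hp, rfl⟩
    exact g_ub ⟨hp.1.le, hp.2.le⟩

end Stmt16

/-- The supremum over `p ∈ (0,1)` of the limiting rates of the fixed-weight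
finite-length codes equals `max_{0≤p≤1} h(p)/(1+p) = log₂((1+√5)/2)`: these codes
asymptotically achieve the noiseless covert channel capacity. -/
theorem stmt_16 :
    sSup {y : ℝ | ∃ p ∈ Set.Ioo (0 : ℝ) 1,
        Tendsto (fun l : ℕ =>
            Real.logb 2 (l.choose ⌊(l : ℝ) * p⌋₊) / ((l : ℝ) + ⌊(l : ℝ) * p⌋₊))
          atTop (nhds y)}
      = sSup ((fun p : ℝ => binEnt p / (1 + p)) '' Set.Icc 0 1) ∧
    sSup ((fun p : ℝ => binEnt p / (1 + p)) '' Set.Icc 0 1)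
      = Real.logb 2 ((1 + Real.sqrt 5) / 2) := by
  have hA := Stmt16.isGreatest_A.csSup_eq
  have hB := Stmt16.isGreatest_B.csSup_eq
  rw [Stmt16.set_eq]
  constructor
  · rw [hA, hB]
  · exact hB
end
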